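/- arXiv:0708.2453 — 5 statements merged into one kernel-verified Lean document; each statement's English description precedes it below -/
import Mathlib

section
/- If θ and ψ are convex differentiable functions on ℝ, then for every x ∈ ℝ and every y > 0, |θ'(x) − ψ'(x)| ≤ ψ'(x+y) − ψ'(x−y) + (1/y)·( |ψ(x+y) − θ(x+y)| + |ψ(x−y) − θ(x−y)| + |ψ(x) − θ(x)| ). -/
/-- Talagrand's convexity lemma: if two convex differentiable functions are close,
then their derivatives are close. -/
theorem convex_deriv_approx (θ ψ : ℝ → ℝ)
    (hθconv : ConvexOn ℝ Set.univ θ) (hψconv : ConvexOn ℝ Set.univ ψ)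
    (hθdiff : Differentiable ℝ θ) (hψdiff : Differentiable ℝ ψ)
    (x y : ℝ) (hy : 0 < y) :
    |deriv θ x - deriv ψ x| ≤
      deriv ψ (x + y) - deriv ψ (x - y) +
        (1 / y) * (|ψ (x + y) - θ (x + y)| + |ψ (x - y) - θ (x - y)| + |ψ x - θ x|) := by
  have hx1 : x < x + y := by linarith
  have hx2 : x - y < x := by linarith
  have h1 : deriv θ x ≤ slope θ x (x + y) :=
    hθconv.deriv_le_slope trivial trivial hx1 (hθdiff x)
  have h2 : slope θ (x - y) x ≤ deriv θ x :=
    hθconv.slope_le_deriv trivial trivial hx2 (hθdiff x)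
  have h3 : deriv ψ x ≤ slope ψ x (x + y) :=
    hψconv.deriv_le_slope trivial trivial hx1 (hψdiff x)
  have h4 : slope ψ (x - y) x ≤ deriv ψ x :=
    hψconv.slope_le_deriv trivial trivial hx2 (hψdiff x)
  have h5 : slope ψ x (x + y) ≤ deriv ψ (x + y) :=
    hψconv.slope_le_deriv trivial trivial hx1 (hψdiff (x + y))
  have h6 : deriv ψ (x - y) ≤ slope ψ (x - y) x :=
    hψconv.deriv_le_slope trivial trivial hx2 (hψdiff (x - y))
  simp only [slope_def_field, div_le_iff₀ hy, le_div_iff₀ hy, show x + y - x = y by ring,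
    show x - (x - y) = y by ring] at h1 h2 h3 h4 h5 h6
  have a1 : θ (x + y) - ψ (x + y) ≤ |ψ (x + y) - θ (x + y)| := by
    rw [abs_sub_comm]; exact le_abs_self _
  have a1' : ψ (x + y) - θ (x + y) ≤ |ψ (x + y) - θ (x + y)| := le_abs_self _
  have a2 : θ (x - y) - ψ (x - y) ≤ |ψ (x - y) - θ (x - y)| := by
    rw [abs_sub_comm]; exact le_abs_self _
  have a2' : ψ (x - y) - θ (x - y) ≤ |ψ (x - y) - θ (x - y)| := le_abs_self _
  have a3 : θ x - ψ x ≤ |ψ x - θ x| := by rw [abs_sub_comm]; exact le_abs_self _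
  have a3' : ψ x - θ x ≤ |ψ x - θ x| := le_abs_self _
  rw [abs_sub_le_iff]
  have hy' : y ≠ 0 := hy.ne'
  constructor
  · rw [← sub_nonneg]
    have key : (deriv ψ (x + y) - deriv ψ (x - y) +
        (1 / y) * (|ψ (x + y) - θ (x + y)| + |ψ (x - y) - θ (x - y)| + |ψ x - θ x|) -
        (deriv θ x - deriv ψ x)) * y ≥ 0 := by
      have : (1 / y) * (|ψ (x + y) - θ (x + y)| + |ψ (x - y) - θ (x - y)| + |ψ x - θ x|) * y
          = |ψ (x + y) - θ (x + y)| + |ψ (x - y) - θ (x - y)| + |ψ x - θ x| := by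
        field_simp
      nlinarith [h1, h4, h5, h6, a1, a3']
    nlinarith [key, hy]
  · rw [← sub_nonneg]
    have key : (deriv ψ (x + y) - deriv ψ (x - y) +
        (1 / y) * (|ψ (x + y) - θ (x + y)| + |ψ (x - y) - θ (x - y)| + |ψ x - θ x|) -
        (deriv ψ x - deriv θ x)) * y ≥ 0 := by
      have : (1 / y) * (|ψ (x + y) - θ (x + y)| + |ψ (x - y) - θ (x - y)| + |ψ x - θ x|) * y
          = |ψ (x + y) - θ (x + y)| + |ψ (x - y) - θ (x - y)| + |ψ x - θ x| := by
        field_simp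
      nlinarith [h2, h3, h5, h6, a2, a3]
    nlinarith [key, hy]
end

section
/- For any Borel probability measure G on the unit sphere S = {z ∈ ℝ^N : |z| = 1} and any ε > 0, one has ε ≤ (1 + ε) · G^{⊗2}{ (z¹,z²) : z¹·z² > −ε }. -/
open MeasureTheory
open scoped RealInnerProductSpace

/-! The mean overlap `∫∫ z¹·z² dG dG = |∫ z dG|²` is nonnegative. Where `z¹·z² > -ε` the overlap
is at most `1`, elsewhere at most `-ε`, so with `p` the measure of that set, `0 ≤ p - ε (1 - p)`. -/

section
variable {E : Type*} [NormedAddCommGroup E] [InnerProductSpace ℝ E] [MeasurableSpace E]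

theorem integrable_inner_prod {μ : Measure E} [SFinite μ] (h : Integrable (fun z => z) μ) :
    Integrable (fun q : E × E => ⟪q.1, q.2⟫) (μ.prod μ) := by
  refine (h.norm.mul_prod h.norm).mono' ?_ (.of_forall fun q => norm_inner_le_norm _ _)
  exact h.aestronglyMeasurable.comp_fst.inner h.aestronglyMeasurable.comp_snd

theorem integral_inner_prod_self [CompleteSpace E] {μ : Measure E} [SFinite μ]
    (h : Integrable (fun z => z) μ) :
    ∫ q, ⟪q.1, q.2⟫ ∂(μ.prod μ) = ‖∫ z, z ∂μ‖ ^ 2 := by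
  have inner_mean (x : E) : ∫ y, ⟪x, y⟫ ∂μ = ⟪∫ y, y ∂μ, x⟫ := by
    rw [integral_inner h, real_inner_comm]
  rw [integral_prod _ (integrable_inner_prod h), ← real_inner_self_eq_norm_sq]
  simp_rw [inner_mean]

theorem le_one_add_mul_measureReal_inner_gt [CompleteSpace E] [OpensMeasurableSpace E]
    [SecondCountableTopology E] {μ : Measure E} [IsProbabilityMeasure μ]
    (hμ : ∀ᵐ z ∂μ, ‖z‖ ≤ 1) (ε : ℝ) :
    ε ≤ (1 + ε) * (μ.prod μ).real {q | -ε < ⟪q.1, q.2⟫} := by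
  set A := {q : E × E | -ε < ⟪q.1, q.2⟫}
  have h_id : Integrable (fun z => z) μ := .of_bound aestronglyMeasurable_id 1 hμ
  have hA : NullMeasurableSet A (μ.prod μ) :=
    nullMeasurableSet_lt aemeasurable_const (integrable_inner_prod h_id).aemeasurable
  have h_ind : Integrable (A.indicator fun _ => 1 + ε) (μ.prod μ) :=
    (integrable_const _).indicator₀ hA
  have h_le : (fun q : E × E => ⟪q.1, q.2⟫) ≤ᵐ[μ.prod μ]
      fun q => A.indicator (fun _ => 1 + ε) q - ε := by
    filter_upwards [Measure.quasiMeasurePreserving_fst.ae hμ,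
      Measure.quasiMeasurePreserving_snd.ae hμ] with q h₁ h₂
    by_cases hq : q ∈ A
    · have : ⟪q.1, q.2⟫ ≤ 1 := (real_inner_le_norm _ _).trans (mul_le_one₀ h₁ (norm_nonneg _) h₂)
      rw [Set.indicator_of_mem hq]; linarith
    · have : ⟪q.1, q.2⟫ ≤ -ε := not_lt.1 hq
      rw [Set.indicator_of_notMem hq]; linarith
  suffices 0 ≤ (1 + ε) * (μ.prod μ).real A - ε by linarith
  calc 0 ≤ ‖∫ z, z ∂μ‖ ^ 2 := sq_nonneg _
    _ = ∫ q, ⟪q.1, q.2⟫ ∂(μ.prod μ) := (integral_inner_prod_self h_id).symm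
    _ ≤ ∫ q, (A.indicator (fun _ => 1 + ε) q - ε) ∂(μ.prod μ) :=
      integral_mono_ae (integrable_inner_prod h_id) (h_ind.sub (integrable_const ε)) h_le
    _ = (1 + ε) * (μ.prod μ).real A - ε := by
      rw [integral_sub h_ind (integrable_const ε), integral_indicator₀ hA, setIntegral_const]
      simp [mul_comm]
end

theorem overlap_not_too_negative_general (N : ℕ)
    (G : Measure (EuclideanSpace ℝ (Fin N))) [IsProbabilityMeasure G]
    (hG : G (Metric.sphere (0 : EuclideanSpace ℝ (Fin N)) 1)ᶜ = 0)
    (ε : ℝ) :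
    ε ≤ (1 + ε) *
      ((G.prod G) {q : EuclideanSpace ℝ (Fin N) × EuclideanSpace ℝ (Fin N) |
        -ε < ⟪q.1, q.2⟫}).toReal := by
  have h_norm : ∀ᵐ z ∂G, ‖z‖ ≤ 1 := by
    filter_upwards [mem_ae_iff.2 hG] with z hz
    exact (mem_sphere_zero_iff_norm.1 hz).le
  exact le_one_add_mul_measureReal_inner_gt h_norm ε

/-- For any Borel probability measure `G` on the unit sphere of `ℝ^N` and any `ε > 0`,
`ε ≤ (1 + ε) · G^{⊗2}{(z¹,z²) : z¹·z² > −ε}`. -/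
theorem overlap_not_too_negative (N : ℕ) (hN : 1 ≤ N)
    (G : Measure (EuclideanSpace ℝ (Fin N))) [IsProbabilityMeasure G]
    (hG : G (Metric.sphere (0 : EuclideanSpace ℝ (Fin N)) 1)ᶜ = 0)
    (ε : ℝ) (hε : 0 < ε) :
    ε ≤ (1 + ε) *
      ((G.prod G) {q : EuclideanSpace ℝ (Fin N) × EuclideanSpace ℝ (Fin N) |
        -ε < ⟪q.1, q.2⟫}).toReal :=
  overlap_not_too_negative_general N G hG ε
end

section
/- Let G be a Borel probability measure on the unit sphere S = {z ∈ ℝ^N : |z| = 1}, let ε > 0 and 0 < γ < 1, and define U = { z¹ ∈ S : G{ z² : z¹·z² ≤ −ε } ≥ γ }. Then G(U) ≤ 2(1 − γ)/ε. -/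
/-!
Let `U` be the bad set and `b = ∫_U z dG`. Then `0 ≤ ‖b‖² = ∫_U ∫_U ⟪z¹, z²⟫ dG dG`. For `z¹ ∈ U`
the inner product is `≤ -ε` except on a set of mass `≤ 1 - γ`, where it is `≤ 1`, so the inner
integral is at most `(1 + ε)(1 - γ) - ε G(U)`. Hence `ε G(U) ≤ (1 + ε)(1 - γ)`, which gives the claim
for `ε ≤ 1`; for `ε > 1` the set `U` is empty since inner products on the sphere are `≥ -1`.
-/

open MeasureTheory
open scoped RealInnerProductSpace

lemma ae_norm_le_one_of_measure_compl_sphere_eq_zero {F : Type*} [NormedAddCommGroup F]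
    [MeasurableSpace F] {μ : Measure F} (h : μ (Metric.sphere 0 1)ᶜ = 0) :
    ∀ᵐ y ∂μ, ‖y‖ ≤ 1 := by
  filter_upwards [mem_ae_iff.mpr h] with y hy
  exact (mem_sphere_zero_iff_norm.mp hy).le

variable {E : Type*} [NormedAddCommGroup E] [InnerProductSpace ℝ E]

lemma abs_real_inner_le_one {x y : E} (hx : ‖x‖ ≤ 1) (hy : ‖y‖ ≤ 1) : |⟪x, y⟫| ≤ 1 :=
  (abs_real_inner_le_norm x y).trans (mul_le_one₀ hx (norm_nonneg y) hy)

lemma real_inner_le_neg_add_indicator {x y : E} (hx : ‖x‖ ≤ 1) (hy : ‖y‖ ≤ 1) (ε : ℝ) :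
    ⟪x, y⟫ ≤ -ε + (1 + ε) * {y | ⟪x, y⟫ ≤ -ε}ᶜ.indicator 1 y := by
  by_cases h : ⟪x, y⟫ ≤ -ε
  · simp [h]
  · have := le_of_abs_le (abs_real_inner_le_one hx hy)
    simp [h]
    linarith

section Integral

variable [CompleteSpace E] [MeasurableSpace E] {μ : Measure E}

lemma integral_inner_eq_inner_integral (h : Integrable id μ) (x : E) :
    ∫ y, ⟪x, y⟫ ∂μ = ⟪x, ∫ y, y ∂μ⟫ :=
  integral_inner h x

lemma integral_integral_inner_eq_norm_sq (h : Integrable id μ) :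
    ∫ x, ∫ y, ⟪x, y⟫ ∂μ ∂μ = ‖∫ x, x ∂μ‖ ^ 2 := by
  simp_rw [integral_inner_eq_inner_integral h, real_inner_comm (∫ y, y ∂μ),
    integral_inner_eq_inner_integral h, real_inner_self_eq_norm_sq]

lemma mul_measureReal_univ_nonneg_of_integral_inner_le [IsFiniteMeasure μ] {K : ℝ}
    (h : Integrable id μ) (hK : ∀ᵐ x ∂μ, ∫ y, ⟪x, y⟫ ∂μ ≤ K) : 0 ≤ K * μ.real Set.univ := by
  have hint : Integrable (fun x ↦ ∫ y, ⟪x, y⟫ ∂μ) μ := by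
    simp_rw [integral_inner_eq_inner_integral h]
    exact h.inner_const _
  calc 0 ≤ ‖∫ x, x ∂μ‖ ^ 2 := by positivity
    _ = ∫ x, ∫ y, ⟪x, y⟫ ∂μ ∂μ := (integral_integral_inner_eq_norm_sq h).symm
    _ ≤ ∫ _, K ∂μ := integral_mono_ae hint (integrable_const K) hK
    _ = K * μ.real Set.univ := by rw [integral_const, smul_eq_mul, mul_comm]

end Integral

variable [MeasurableSpace E] {G : Measure E} {ε γ : ℝ}

def badSet (G : Measure E) (ε γ : ℝ) : Set E :=
  {x | x ∈ Metric.sphere 0 1 ∧ ENNReal.ofReal γ ≤ G {y | ⟪x, y⟫ ≤ -ε}}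

lemma badSet_eq_empty (hG : G (Metric.sphere 0 1)ᶜ = 0) (hε : 1 < ε) (hγ : 0 < γ) :
    badSet G ε γ = ∅ := by
  refine Set.eq_empty_of_forall_notMem fun x ⟨hx, hxγ⟩ ↦ ?_
  have hnull : {y | ⟪x, y⟫ ≤ -ε} ⊆ (Metric.sphere 0 1)ᶜ := fun y hy hy1 ↦ by
    have := neg_le_of_abs_le (abs_real_inner_le_one (mem_sphere_zero_iff_norm.mp hx).le
      (mem_sphere_zero_iff_norm.mp hy1).le)
    exact (not_le.mpr (by linarith : -ε < ⟪x, y⟫)) hy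
  rw [measure_mono_null hnull hG, nonpos_iff_eq_zero, ENNReal.ofReal_eq_zero] at hxγ
  linarith

variable [BorelSpace E]

lemma measurableSet_inner_le (x : E) (ε : ℝ) : MeasurableSet {y : E | ⟪x, y⟫ ≤ -ε} :=
  (isClosed_le (continuous_const.inner continuous_id) continuous_const).measurableSet

lemma measurableSet_badSet [SecondCountableTopology E] [SFinite G] :
    MeasurableSet (badSet G ε γ) := by
  have hC : MeasurableSet {p : E × E | ⟪p.1, p.2⟫ ≤ -ε} :=
    (isClosed_le (continuous_fst.inner continuous_snd) continuous_const).measurableSet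
  exact Metric.isClosed_sphere.measurableSet.inter
    (measurable_measure_prodMk_left hC measurableSet_Ici)

lemma integral_inner_le_of_mem_badSet [IsProbabilityMeasure G] (hG : G (Metric.sphere 0 1)ᶜ = 0)
    (hε : 0 ≤ ε) {U : Set E} {x : E} (hx : x ∈ badSet G ε γ) :
    ∫ y in U, ⟪x, y⟫ ∂G ≤ (1 + ε) * (1 - γ) - ε * G.real U := by
  set C := {y | ⟪x, y⟫ ≤ -ε}
  have hCγ : γ ≤ G.real C := (ENNReal.ofReal_le_iff_le_toReal (measure_ne_top G C)).mp hx.2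
  have hCc : G.real (Cᶜ ∩ U) ≤ 1 - γ :=
    calc G.real (Cᶜ ∩ U) ≤ G.real Cᶜ := measureReal_mono Set.inter_subset_left
      _ = 1 - G.real C := probReal_compl_eq_one_sub (measurableSet_inner_le x ε)
      _ ≤ 1 - γ := by linarith
  have hx1 : ‖x‖ ≤ 1 := (mem_sphere_zero_iff_norm.mp hx.1).le
  have hnorm := ae_restrict_of_ae (s := U) (ae_norm_le_one_of_measure_compl_sphere_eq_zero hG)
  have hint_inner : Integrable (fun y ↦ ⟪x, y⟫) (G.restrict U) :=
    .of_bound (continuous_const.inner continuous_id).aestronglyMeasurable 1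
      (hnorm.mono fun y hy ↦ abs_real_inner_le_one hx1 hy)
  have hint_ind : Integrable (Cᶜ.indicator (1 : E → ℝ)) (G.restrict U) :=
    (integrable_const 1).indicator (measurableSet_inner_le x ε).compl
  calc ∫ y in U, ⟪x, y⟫ ∂G ≤ ∫ y in U, (-ε + (1 + ε) * Cᶜ.indicator 1 y) ∂G :=
        integral_mono_ae hint_inner ((integrable_const _).add (hint_ind.const_mul _))
          (hnorm.mono fun y hy ↦ real_inner_le_neg_add_indicator hx1 hy ε)
    _ = -ε * G.real U + (1 + ε) * G.real (Cᶜ ∩ U) := by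
        rw [integral_add (integrable_const _) (hint_ind.const_mul _), integral_const_mul,
          integral_indicator_one (measurableSet_inner_le x ε).compl, setIntegral_const,
          measureReal_restrict_apply (measurableSet_inner_le x ε).compl, smul_eq_mul, mul_comm]
    _ ≤ (1 + ε) * (1 - γ) - ε * G.real U := by nlinarith

lemma mul_measureReal_badSet_le [CompleteSpace E] [SecondCountableTopology E]
    [IsProbabilityMeasure G] (hG : G (Metric.sphere 0 1)ᶜ = 0) (hε : 0 ≤ ε) (hγ : γ ≤ 1) :
    ε * G.real (badSet G ε γ) ≤ (1 + ε) * (1 - γ) := by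
  set U := badSet G ε γ
  have hid : Integrable id (G.restrict U) := .of_bound measurable_id.aestronglyMeasurable 1
    (ae_restrict_of_ae (ae_norm_le_one_of_measure_compl_sphere_eq_zero hG))
  have key := mul_measureReal_univ_nonneg_of_integral_inner_le hid
    (K := (1 + ε) * (1 - γ) - ε * G.real U) <| (ae_restrict_mem measurableSet_badSet).mono
      fun x hx ↦ integral_inner_le_of_mem_badSet hG hε hx
  rw [measureReal_restrict_apply_univ] at key
  rcases measureReal_nonneg.eq_or_lt with hU | hU
  · rw [← hU, mul_zero]
    exact mul_nonneg (by linarith) (by linarith)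
  · linarith [nonneg_of_mul_nonneg_left key hU]

theorem measure_bad_set_le_general (N : ℕ)
    (G : Measure (EuclideanSpace ℝ (Fin N))) [IsProbabilityMeasure G]
    (hG : G (Metric.sphere (0 : EuclideanSpace ℝ (Fin N)) 1)ᶜ = 0)
    (ε γ : ℝ) (hε : 0 < ε) (hγ0 : 0 < γ) (hγ1 : γ < 1) :
    (G {z1 : EuclideanSpace ℝ (Fin N) | z1 ∈ Metric.sphere (0 : EuclideanSpace ℝ (Fin N)) 1 ∧
        ENNReal.ofReal γ ≤ G {z2 : EuclideanSpace ℝ (Fin N) | ⟪z1, z2⟫ ≤ -ε}}).toReal ≤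
      2 * (1 - γ) / ε := by
  change G.real (badSet G ε γ) ≤ _
  rcases le_or_gt ε 1 with hε1 | hε1
  · have := mul_measureReal_badSet_le hG hε.le hγ1.le
    rw [le_div_iff₀ hε]
    nlinarith
  · rw [badSet_eq_empty hG hε1 hγ0, measureReal_empty]
    exact div_nonneg (by linarith) hε.le

/-- If `U` is the set of points `z¹` on the sphere such that
`G{z² : z¹·z² ≤ −ε} ≥ γ`, then `G(U) ≤ 2(1−γ)/ε`. -/
theorem measure_bad_set_le (N : ℕ) (hN : 1 ≤ N)
    (G : Measure (EuclideanSpace ℝ (Fin N))) [IsProbabilityMeasure G]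
    (hG : G (Metric.sphere (0 : EuclideanSpace ℝ (Fin N)) 1)ᶜ = 0)
    (ε γ : ℝ) (hε : 0 < ε) (hγ0 : 0 < γ) (hγ1 : γ < 1) :
    (G {z1 : EuclideanSpace ℝ (Fin N) | z1 ∈ Metric.sphere (0 : EuclideanSpace ℝ (Fin N)) 1 ∧
        ENNReal.ofReal γ ≤ G {z2 : EuclideanSpace ℝ (Fin N) | ⟪z1, z2⟫ ≤ -ε}}).toReal ≤
      2 * (1 - γ) / ε :=
  measure_bad_set_le_general N G hG ε γ hε hγ0 hγ1
end

section
/- Let G be a Borel probability measure on the unit sphere S = {z ∈ ℝ^N : |z| = 1}, let ε > 0, let n ≥ 2, and let 0 < γ < 1. Then G^{⊗n}{ (z¹,…,z^n) : z¹·z^l ≤ −ε for all 2 ≤ l ≤ n } ≤ 2(1 − γ)/ε + γ^{n−1}. -/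
open MeasureTheory Set
open scoped RealInnerProductSpace ENNReal

/-! Conditioning on the first sample, the event has probability `∫ q(w)^(n-1) dG(w)` with
`q(w) = G{z | w·z ≤ -ε}`; the points with `q(w) ≤ γ` contribute at most `γ^(n-1)`. On the set
`B` of unit vectors with `q(w) > γ`, every `w` has `w·z > -ε` on at most `1 - γ` of the mass, so
the barycentre `m = ∫_B z` satisfies
`0 ≤ |m|² = ∫_B ∫_B w·z ≤ G(B) (-ε G(B) + (1 + ε)(1 - γ))`, i.e. `ε G(B) ≤ (1 + ε)(1 - γ)`.
This gives `G(B) ≤ 2(1 - γ)/ε` when `ε ≤ 1`, and for `ε > 1` the set `B` is empty since two unit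
vectors have inner product at least `-1`. -/

section Product

variable {α : Type*} [MeasurableSpace α]

theorem measure_pi_forall_succ_mem (μ : Measure α) [SigmaFinite μ] {s : Set (α × α)}
    (hs : MeasurableSet s) (m : ℕ) :
    Measure.pi (fun _ : Fin (m + 1) => μ) {z | ∀ j : Fin m, (z 0, z j.succ) ∈ s} =
      ∫⁻ w, μ (Prod.mk w ⁻¹' s) ^ m ∂μ := by
  set T : Set (α × (Fin m → α)) := {p | ∀ j, (p.1, p.2 j) ∈ s}
  have hT : MeasurableSet T := by
    simp only [T, ofPred_forall]
    exact MeasurableSet.iInter fun j => hs.preimage (by fun_prop)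
  have hpre : {z : Fin (m + 1) → α | ∀ j : Fin m, (z 0, z j.succ) ∈ s} =
      MeasurableEquiv.piFinSuccAbove (fun _ => α) 0 ⁻¹' T := rfl
  rw [hpre, (measurePreserving_piFinSuccAbove (fun _ => μ) 0).measure_preimage
    hT.nullMeasurableSet, Measure.prod_apply hT]
  refine lintegral_congr fun w => ?_
  have hslice : Prod.mk w ⁻¹' T = univ.pi fun _ : Fin m => Prod.mk w ⁻¹' s := by
    ext; simp [T]
  rw [hslice, Measure.pi_pi, Finset.prod_const, Finset.card_univ, Fintype.card_fin]

theorem lintegral_pow_le_measure_lt_add {μ : Measure α} [IsProbabilityMeasure μ]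
    {f : α → ℝ≥0∞} (hf : ∀ x, f x ≤ 1) (c : ℝ≥0∞) (m : ℕ) :
    ∫⁻ x, f x ^ m ∂μ ≤ μ {x | c < f x} + c ^ m := by
  have hpt : ∀ x, f x ^ m ≤ {x | c < f x}.indicator 1 x + c ^ m := by
    intro x
    by_cases hx : c < f x
    · rw [indicator_of_mem (show x ∈ {x | c < f x} from hx), Pi.one_apply]
      exact (pow_le_one₀ zero_le (hf x)).trans le_self_add
    · rw [indicator_of_notMem (show x ∉ {x | c < f x} from hx), zero_add]
      exact pow_le_pow_left' (not_lt.1 hx) m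
  calc ∫⁻ x, f x ^ m ∂μ ≤ ∫⁻ x, ({x | c < f x}.indicator 1 x + c ^ m) ∂μ := lintegral_mono hpt
    _ = ∫⁻ x, {x | c < f x}.indicator 1 x ∂μ + c ^ m := by
      rw [lintegral_add_right _ measurable_const, lintegral_const, measure_univ, mul_one]
    _ ≤ μ {x | c < f x} + c ^ m := by
      gcongr
      exact (lintegral_indicator_le _ _).trans (setLIntegral_one _).le

end Product

section InnerProduct

variable {E : Type*} [NormedAddCommGroup E] [InnerProductSpace ℝ E] [MeasurableSpace E]

theorem measure_setOf_inner_le_neg_eq_zero {μ : Measure E}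
    (hμ : μ (Metric.sphere 0 1)ᶜ = 0) {w : E} (hw : ‖w‖ = 1) {ε : ℝ} (hε : 1 < ε) :
    μ {z | ⟪w, z⟫ ≤ -ε} = 0 := by
  refine measure_mono_null (t := (Metric.sphere 0 1)ᶜ) (fun z (hz : ⟪w, z⟫ ≤ -ε) hzS => ?_) hμ
  have h := neg_le_of_abs_le (abs_real_inner_le_norm w z)
  rw [hw, mem_sphere_zero_iff_norm.1 hzS, mul_one] at h
  linarith

variable [BorelSpace E]

theorem measurableSet_setOf_inner_le [SecondCountableTopology E] (c : ℝ) :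
    MeasurableSet {p : E × E | ⟪p.1, p.2⟫ ≤ c} :=
  (isClosed_le (continuous_fst.inner continuous_snd) continuous_const).measurableSet

theorem setIntegral_inner_le {μ : Measure E} [IsFiniteMeasure μ] {B : Set E}
    (hB : MeasurableSet B) (hB1 : ∀ z ∈ B, ‖z‖ ≤ 1) {w : E} (hw : ‖w‖ ≤ 1) (ε : ℝ) :
    ∫ z in B, ⟪w, z⟫ ∂μ ≤ -ε * μ.real B + (1 + ε) * μ.real (B ∩ {z | -ε < ⟪w, z⟫}) := by
  set C := {z | -ε < ⟪w, z⟫}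
  have hC : MeasurableSet C := measurableSet_lt measurable_const (by fun_prop)
  have hle : ∀ z ∈ B, ‖⟪w, z⟫‖ ≤ 1 := fun z hz =>
    (norm_inner_le_norm w z).trans (mul_le_one₀ hw (norm_nonneg z) (hB1 z hz))
  have hinner : IntegrableOn (fun z => ⟪w, z⟫) B μ :=
    IntegrableOn.of_bound (measure_lt_top μ B) (by fun_prop) 1
      ((ae_restrict_iff' hB).2 (ae_of_all _ hle))
  have hstep : IntegrableOn (fun z => -ε + C.indicator (fun _ => 1 + ε) z) B μ :=
    (integrable_const _).add ((integrable_const _).indicator hC)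
  calc ∫ z in B, ⟪w, z⟫ ∂μ ≤ ∫ z in B, (-ε + C.indicator (fun _ => 1 + ε) z) ∂μ := by
        refine setIntegral_mono_on hinner hstep hB fun z hz => ?_
        by_cases hzC : z ∈ C
        · rw [indicator_of_mem hzC]
          linarith [(Real.le_norm_self _).trans (hle z hz)]
        · rw [indicator_of_notMem hzC]
          exact (not_lt.1 hzC).trans_eq (add_zero _).symm
    _ = -ε * μ.real B + (1 + ε) * μ.real (B ∩ C) := by
      rw [integral_add (integrable_const _) ((integrable_const _).indicator hC),
        setIntegral_indicator hC, setIntegral_const, setIntegral_const, smul_eq_mul, smul_eq_mul,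
        mul_comm, mul_comm _ (1 + ε)]

theorem mul_measureReal_le_of_measureReal_inner_gt_le [SecondCountableTopology E]
    [CompleteSpace E] {μ : Measure E} [IsFiniteMeasure μ] {B : Set E} (hB : MeasurableSet B)
    (hB1 : ∀ z ∈ B, ‖z‖ ≤ 1) {ε δ : ℝ} (hε : 0 ≤ ε) (hδ : 0 ≤ δ)
    (hBδ : ∀ w ∈ B, μ.real (B ∩ {z | -ε < ⟪w, z⟫}) ≤ δ) :
    ε * μ.real B ≤ (1 + ε) * δ := by
  have hint : Integrable (fun z => z) (μ.restrict B) :=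
    IntegrableOn.of_bound (measure_lt_top μ B) aestronglyMeasurable_id 1
      ((ae_restrict_iff' hB).2 (ae_of_all _ hB1))
  set b := μ.real B
  set m := ∫ z in B, z ∂μ
  have hbary : 0 ≤ b * (-ε * b + (1 + ε) * δ) := calc
    0 ≤ ⟪m, m⟫ := real_inner_self_nonneg
    _ = ∫ w in B, ⟪m, w⟫ ∂μ := (integral_inner hint m).symm
    _ ≤ ∫ _ in B, (-ε * b + (1 + ε) * δ) ∂μ := by
      refine setIntegral_mono_on (hint.const_inner m) (integrableOn_const (measure_ne_top μ B))
        hB fun w hw => ?_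
      rw [real_inner_comm, ← integral_inner hint w]
      exact (setIntegral_inner_le hB hB1 (hB1 w hw) ε).trans (by gcongr; exact hBδ w hw)
    _ = b * (-ε * b + (1 + ε) * δ) := by rw [setIntegral_const, smul_eq_mul]
  have hb0 : 0 ≤ b := measureReal_nonneg
  rcases hb0.eq_or_lt' with hb | hb
  · rw [hb, mul_zero]; positivity
  · nlinarith [(mul_nonneg_iff_of_pos_left hb).1 hbary]

theorem measureReal_setOf_lt_measure_inner_le_neg_le [SecondCountableTopology E]
    [CompleteSpace E] {μ : Measure E} [IsProbabilityMeasure μ]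
    (hμ : μ (Metric.sphere 0 1)ᶜ = 0) {ε γ : ℝ} (hε : 0 < ε) (hγ1 : γ ≤ 1) :
    μ.real {w | ENNReal.ofReal γ < μ {z | ⟪w, z⟫ ≤ -ε}} ≤ 2 * (1 - γ) / ε := by
  set B := {w | ENNReal.ofReal γ < μ {z | ⟪w, z⟫ ≤ -ε}} ∩ Metric.sphere 0 1
  have hB : MeasurableSet B :=
    (measurable_measure_prodMk_left (measurableSet_setOf_inner_le (-ε)) measurableSet_Ioi).inter
      Metric.isClosed_sphere.measurableSet
  suffices μ.real B ≤ 2 * (1 - γ) / ε by rwa [measureReal_def, ← measure_inter_conull hμ]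
  rcases le_or_gt ε 1 with hε1 | hε1
  · have hB1 : ∀ z ∈ B, ‖z‖ ≤ 1 := fun z hz => (mem_sphere_zero_iff_norm.1 hz.2).le
    have hBγ : ∀ w ∈ B, μ.real (B ∩ {z | -ε < ⟪w, z⟫}) ≤ 1 - γ := fun w hw => calc
      μ.real (B ∩ {z | -ε < ⟪w, z⟫}) ≤ μ.real {z | ⟪w, z⟫ ≤ -ε}ᶜ :=
        measureReal_mono fun z hz => not_le.2 (show -ε < ⟪w, z⟫ from hz.2)
      _ = 1 - μ.real {z | ⟪w, z⟫ ≤ -ε} := probReal_compl_eq_one_sub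
        (measurableSet_le (by fun_prop) measurable_const)
      _ ≤ 1 - γ := by
        gcongr
        exact (ENNReal.ofReal_le_iff_le_toReal (measure_ne_top _ _)).1 hw.1.le
    have := mul_measureReal_le_of_measureReal_inner_gt_le hB hB1 hε.le (sub_nonneg.2 hγ1) hBγ
    rw [le_div_iff₀ hε]
    nlinarith
  · have hBempty : B = ∅ := eq_empty_of_forall_notMem fun w hw => by
      have hlt := hw.1
      rw [mem_ofPred_eq, measure_setOf_inner_le_neg_eq_zero hμ
        (mem_sphere_zero_iff_norm.1 hw.2) hε1] at hlt
      exact not_lt_zero hlt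
    rw [hBempty, measureReal_empty]
    exact div_nonneg (by linarith) hε.le

end InnerProduct

/-- For any Borel probability measure `G` on the unit sphere of `ℝ^N`, any `ε > 0`,
`n ≥ 2` and `0 < γ < 1`, the probability that `n` i.i.d. samples satisfy
`z¹·z^l ≤ −ε` for all `2 ≤ l ≤ n` is at most `2(1−γ)/ε + γ^(n−1)`. -/
theorem all_overlaps_negative_le (N : ℕ)
    (G : Measure (EuclideanSpace ℝ (Fin N))) [IsProbabilityMeasure G]
    (hG : G (Metric.sphere (0 : EuclideanSpace ℝ (Fin N)) 1)ᶜ = 0)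
    (n : ℕ) (hn : 2 ≤ n) (ε γ : ℝ) (hε : 0 < ε) (hγ0 : 0 < γ) (hγ1 : γ < 1) :
    ((Measure.pi fun _ : Fin n => G)
        {z : Fin n → EuclideanSpace ℝ (Fin N) |
          ∀ l : Fin n, l ≠ ⟨0, by omega⟩ → ⟪z ⟨0, by omega⟩, z l⟫ ≤ -ε}).toReal ≤
      2 * (1 - γ) / ε + γ ^ (n - 1) := by
  obtain ⟨m, rfl⟩ : ∃ m, n = m + 1 := ⟨n - 1, by omega⟩
  have hevent : {z : Fin (m + 1) → EuclideanSpace ℝ (Fin N) |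
      ∀ l : Fin (m + 1), l ≠ ⟨0, by omega⟩ → ⟪z ⟨0, by omega⟩, z l⟫ ≤ -ε} =
      {z | ∀ j : Fin m, (z 0, z j.succ) ∈ {p | ⟪p.1, p.2⟫ ≤ -ε}} := by
    ext z
    simp [Fin.forall_fin_succ]
  have hbound := (measure_pi_forall_succ_mem G (measurableSet_setOf_inner_le (-ε)) m).trans_le
    (lintegral_pow_le_measure_lt_add (fun _ => prob_le_one) (ENNReal.ofReal γ) m)
  rw [hevent, Nat.add_sub_cancel]
  calc _ ≤ (G {w | ENNReal.ofReal γ < G {z | ⟪w, z⟫ ≤ -ε}} + ENNReal.ofReal γ ^ m).toReal :=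
        ENNReal.toReal_mono (by finiteness) hbound
    _ = G.real {w | ENNReal.ofReal γ < G {z | ⟪w, z⟫ ≤ -ε}} + γ ^ m := by
      rw [ENNReal.toReal_add (by finiteness) (by finiteness), ENNReal.toReal_pow,
        ENNReal.toReal_ofReal hγ0.le]
      rfl
    _ ≤ 2 * (1 - γ) / ε + γ ^ m := by
      gcongr
      exact measureReal_setOf_lt_measure_inner_le_neg_le hG hε hγ1.le
end

section
/- For every integer n ≥ 3 and every a ∈ [0,1], one has ∏_{l=2}^{n−1} (l − 1 + a)/l ≥ n^{a−1} / 2. -/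
/-! Bernoulli's inequality `(1 - 1/l)^(1-a) ≤ 1 - (1-a)/l` bounds each factor `(l-1+a)/l` below
by `((l-1)/l)^(1-a)`, and these lower bounds telescope to `(n-1)^(a-1) ≥ n^(a-1)`. -/

open Finset

lemma prod_Icc_two_sub_one_div (m : ℕ) (hm : 1 ≤ m) :
    ∏ l ∈ Icc 2 m, ((l : ℝ) - 1) / l = (m : ℝ)⁻¹ := by
  induction m, hm using Nat.le_induction with
  | base => simp
  | succ m hm ih =>
    rw [prod_Icc_succ_top (by omega), ih]
    have hm0 : (m : ℝ) ≠ 0 := by positivity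
    push_cast
    field_simp
    ring

lemma sub_one_div_rpow_le {l : ℝ} (hl : 1 ≤ l) {a : ℝ} (ha0 : 0 ≤ a) (ha1 : a ≤ 1) :
    ((l - 1) / l) ^ (1 - a) ≤ (l - 1 + a) / l := by
  have hl0 : 0 < l := by linarith
  have hs : -1 ≤ -l⁻¹ := neg_le_neg (inv_le_one_of_one_le₀ hl)
  calc ((l - 1) / l) ^ (1 - a) = (1 + -l⁻¹) ^ (1 - a) := by field_simp; ring_nf
    _ ≤ 1 + (1 - a) * -l⁻¹ := rpow_one_add_le_one_add_mul_self hs (by linarith) (by linarith)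
    _ = (l - 1 + a) / l := by field_simp; ring

lemma rpow_sub_one_le_prod_Icc (m : ℕ) (hm : 1 ≤ m) {a : ℝ} (ha0 : 0 ≤ a) (ha1 : a ≤ 1) :
    (m : ℝ) ^ (a - 1) ≤ ∏ l ∈ Icc 2 m, ((l : ℝ) - 1 + a) / l := by
  have hfactor_nonneg : ∀ l ∈ Icc 2 m, 0 ≤ ((l : ℝ) - 1) / l := fun l hl => by
    have : (2 : ℝ) ≤ l := by exact_mod_cast (mem_Icc.mp hl).1
    exact div_nonneg (by linarith) (by linarith)
  calc (m : ℝ) ^ (a - 1) = (∏ l ∈ Icc 2 m, ((l : ℝ) - 1) / l) ^ (1 - a) := by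
        rw [prod_Icc_two_sub_one_div m hm, Real.inv_rpow (by positivity), ← Real.rpow_neg
          (by positivity), neg_sub]
    _ = ∏ l ∈ Icc 2 m, (((l : ℝ) - 1) / l) ^ (1 - a) :=
        (Real.finsetProd_rpow _ _ hfactor_nonneg _).symm
    _ ≤ ∏ l ∈ Icc 2 m, ((l : ℝ) - 1 + a) / l := by
        refine prod_le_prod (fun l hl => Real.rpow_nonneg (hfactor_nonneg l hl) _) fun l hl => ?_
        have hl1 : 1 ≤ l := by linarith [(mem_Icc.mp hl).1]
        exact sub_one_div_rpow_le (by exact_mod_cast hl1) ha0 ha1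

/-- For every integer `n ≥ 3` and every `a ∈ [0,1]`,
`∏_{l=2}^{n−1} (l − 1 + a)/l ≥ n^(a−1)/2`. -/
theorem prod_ratio_ge (n : ℕ) (hn : 3 ≤ n) (a : ℝ) (ha0 : 0 ≤ a) (ha1 : a ≤ 1) :
    (n : ℝ) ^ (a - 1) / 2 ≤ ∏ l ∈ Finset.Icc 2 (n - 1), ((l : ℝ) - 1 + a) / l := by
  have hpred : (1 : ℝ) ≤ ((n - 1 : ℕ) : ℝ) := by exact_mod_cast (by omega : 1 ≤ n - 1)
  calc (n : ℝ) ^ (a - 1) / 2 ≤ (n : ℝ) ^ (a - 1) := half_le_self (by positivity)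
    _ ≤ ((n - 1 : ℕ) : ℝ) ^ (a - 1) :=
        Real.rpow_le_rpow_of_nonpos (by linarith) (by exact_mod_cast Nat.sub_le n 1)
          (by linarith)
    _ ≤ _ := rpow_sub_one_le_prod_Icc (n - 1) (by omega) ha0 ha1
end
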